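/- arXiv:1409.3446 — 4 statements merged into one kernel-verified Lean document; each statement's English description precedes it below -/
import Mathlib

section
/- Let (Ω, ℱ, P) be a probability space, 𝒢 ⊆ ℱ a sub-σ-algebra, E = EuclideanSpace ℝ (Fin m), k ∈ ℕ with k ≥ 1, and for each i ∈ {1,…,k} let g_i : Ω → E be 𝒢-measurable and bounded, s_i : Ω → E with ‖s_i‖² integrable, α_i ≥ λ for a constant λ > 0, and let K₆ > 0, K₇ ≥ 0, K₈ ≥ 0 be constants. Suppose almost surely: (i) ⟪g_i, E[s_i ∣ 𝒢]⟫ ≤ −K₆‖g_i‖² for each i, and (ii) E[‖s_i‖² ∣ 𝒢] ≤ K₇‖g_i‖² + K₈ for each i. Define b = Σ_{i=1}^k ‖s_i‖ and G = −Σ_{i=1}^k α_i ⟪g_i, s_i⟫. Then almost surely E[b² ∣ 𝒢] ≤ (k K₇ / (λ K₆)) · E[G ∣ 𝒢] + k² K₈. -/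
/-! By Cauchy–Schwarz `b² ≤ k ∑ ‖sᵢ‖²`, so condition (ii) gives
`E[b² ∣ 𝒢] ≤ k K₇ ∑ ‖gᵢ‖² + k² K₈`. Since `gᵢ` is bounded and `𝒢`-measurable it pulls out of
`E[⟪gᵢ, sᵢ⟫ ∣ 𝒢]`, and condition (i) with `αᵢ ≥ λ` gives `E[G ∣ 𝒢] ≥ λ K₆ ∑ ‖gᵢ‖²`;
eliminating `∑ ‖gᵢ‖²` between the two bounds yields the claim. -/

open MeasureTheory RealInnerProductSpace

namespace MeasureTheory

variable {Ω : Type*} {m mΩ : MeasurableSpace Ω} {μ : Measure Ω}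

theorem condExp_fun_sum {ι E : Type*} [Fintype ι] [NormedAddCommGroup E] [NormedSpace ℝ E]
    [CompleteSpace E] {f : ι → Ω → E} (hf : ∀ i, Integrable (f i) μ) :
    μ[fun ω ↦ ∑ i, f i ω | m] =ᵐ[μ] fun ω ↦ ∑ i, (μ[f i | m]) ω := by
  simpa only [← Finset.sum_fn] using condExp_finsetSum (fun i _ ↦ hf i) m

theorem condExp_const_mul (c : ℝ) (f : Ω → ℝ) :
    μ[fun ω ↦ c * f ω | m] =ᵐ[μ] fun ω ↦ c * (μ[f | m]) ω :=
  condExp_smul c f m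

theorem condExp_sq_sum_le_card_mul_sum {ι : Type*} [Fintype ι] {f : ι → Ω → ℝ}
    (hf : ∀ i, MemLp (f i) 2 μ) :
    μ[fun ω ↦ (∑ i, f i ω) ^ 2 | m]
      ≤ᵐ[μ] fun ω ↦ Fintype.card ι * ∑ i, (μ[fun ω ↦ f i ω ^ 2 | m]) ω := by
  have hf_sq : ∀ i, Integrable (fun ω ↦ f i ω ^ 2) μ := fun i ↦ (hf i).integrable_sq
  have hsum_sq : Integrable (fun ω ↦ ∑ i, f i ω ^ 2) μ := integrable_finsetSum _ fun i _ ↦ hf_sq i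
  have hcs : ∀ ω, (∑ i, f i ω) ^ 2 ≤ Fintype.card ι * ∑ i, f i ω ^ 2 := fun ω ↦ by
    simpa using sq_sum_le_card_mul_sum_sq (s := Finset.univ) (f := fun i ↦ f i ω)
  calc μ[fun ω ↦ (∑ i, f i ω) ^ 2 | m]
      ≤ᵐ[μ] μ[fun ω ↦ Fintype.card ι * ∑ i, f i ω ^ 2 | m] :=
        condExp_mono (memLp_finsetSum _ fun i _ ↦ hf i).integrable_sq
          (hsum_sq.const_mul _) (ae_of_all _ hcs)
    _ =ᵐ[μ] fun ω ↦ Fintype.card ι * (μ[fun ω ↦ ∑ i, f i ω ^ 2 | m]) ω := condExp_const_mul _ _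
    _ =ᵐ[μ] fun ω ↦ Fintype.card ι * ∑ i, (μ[fun ω ↦ f i ω ^ 2 | m]) ω := by
        filter_upwards [condExp_fun_sum hf_sq] with ω hω
        rw [hω]

theorem condExp_sum_mul_inner_of_stronglyMeasurable_of_bound {ι E : Type*} [Fintype ι]
    [NormedAddCommGroup E] [InnerProductSpace ℝ E] [CompleteSpace E] [IsFiniteMeasure μ]
    (hm : m ≤ mΩ) (c : ι → ℝ) {g s : ι → Ω → E} (hg : ∀ i, StronglyMeasurable[m] (g i))
    {C : ι → ℝ} (hgC : ∀ i ω, ‖g i ω‖ ≤ C i) (hs : ∀ i, Integrable (s i) μ) :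
    μ[fun ω ↦ ∑ i, c i * ⟪g i ω, s i ω⟫ | m]
      =ᵐ[μ] fun ω ↦ ∑ i, c i * ⟪g i ω, (μ[s i | m]) ω⟫ := by
  have h_int : ∀ i, Integrable (fun ω ↦ ⟪g i ω, s i ω⟫) μ := fun i ↦
    (innerSL ℝ).integrable_of_bilin_of_bdd_left (C i) ((hg i).mono hm).aestronglyMeasurable
      (ae_of_all _ (hgC i)) (hs i)
  have h_term : ∀ i, μ[fun ω ↦ c i * ⟪g i ω, s i ω⟫ | m]
      =ᵐ[μ] fun ω ↦ c i * ⟪g i ω, (μ[s i | m]) ω⟫ := fun i ↦ by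
    have h_pull_out : μ[fun ω ↦ ⟪g i ω, s i ω⟫ | m] =ᵐ[μ] fun ω ↦ ⟪g i ω, (μ[s i | m]) ω⟫ :=
      condExp_stronglyMeasurable_bilin_of_bound (innerSL ℝ) hm (hg i) (hs i) (C i)
        (ae_of_all _ (hgC i))
    filter_upwards [condExp_const_mul (c i) _, h_pull_out] with ω h_mul h_inner
    rw [h_mul, h_inner]
  filter_upwards [condExp_fun_sum fun i ↦ (h_int i).const_mul (c i),
    ae_all_iff.2 h_term] with ω hsum hterm
  rw [hsum]
  exact Finset.sum_congr rfl fun i _ ↦ hterm i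

end MeasureTheory

theorem card_mul_sum_le_of_descent {ι : Type*} [Fintype ι] {u v x α : ι → ℝ}
    {lam K₆ K₇ K₈ : ℝ} (hlam : 0 < lam) (hα : ∀ i, lam ≤ α i) (hK₆ : 0 < K₆) (hK₇ : 0 ≤ K₇)
    (hx : ∀ i, 0 ≤ x i) (hu : ∀ i, u i ≤ K₇ * x i + K₈) (hv : ∀ i, v i ≤ -K₆ * x i) :
    Fintype.card ι * ∑ i, u i
      ≤ Fintype.card ι * K₇ / (lam * K₆) * -∑ i, α i * v i + Fintype.card ι ^ 2 * K₈ := by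
  set n : ℝ := (Fintype.card ι : ℝ)
  have h_descent : lam * K₆ * ∑ i, x i ≤ -∑ i, α i * v i := by
    rw [Finset.mul_sum, ← Finset.sum_neg_distrib]
    gcongr with i
    have hα_nonneg : 0 ≤ α i := hlam.le.trans (hα i)
    calc lam * K₆ * x i = lam * (K₆ * x i) := mul_assoc _ _ _
      _ ≤ α i * (K₆ * x i) := by gcongr; exacts [mul_nonneg hK₆.le (hx i), hα i]
      _ ≤ -(α i * v i) := by linarith [mul_le_mul_of_nonneg_left (hv i) hα_nonneg]
  have h_sum : ∑ i, u i ≤ K₇ * ∑ i, x i + n * K₈ := by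
    calc ∑ i, u i ≤ ∑ i, (K₇ * x i + K₈) := Finset.sum_le_sum fun i _ ↦ hu i
      _ = K₇ * ∑ i, x i + n * K₈ := by simp [Finset.sum_add_distrib, Finset.mul_sum, n]
  have hn : 0 ≤ n := Nat.cast_nonneg _
  calc n * ∑ i, u i ≤ n * (K₇ * ∑ i, x i + n * K₈) := by gcongr
    _ = n * K₇ / (lam * K₆) * (lam * K₆ * ∑ i, x i) + n ^ 2 * K₈ := by field_simp
    _ ≤ n * K₇ / (lam * K₆) * -∑ i, α i * v i + n ^ 2 * K₈ := by gcongr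

theorem condexp_square_update_bound_general
    {Ω : Type*} {mΩ : MeasurableSpace Ω} (μ : Measure Ω) [IsProbabilityMeasure μ]
    (m : MeasurableSpace Ω) (hm : m ≤ mΩ)
    {d : ℕ} (k : ℕ)
    (g s : Fin k → Ω → EuclideanSpace ℝ (Fin d))
    (α : Fin k → ℝ) (lam K₆ K₇ K₈ : ℝ)
    (hlam : 0 < lam) (hα : ∀ i, lam ≤ α i)
    (hK₆ : 0 < K₆) (hK₇ : 0 ≤ K₇)
    (hg_meas : ∀ i, StronglyMeasurable[m] (g i))
    (hg_bdd : ∀ i, ∃ C : ℝ, ∀ ω, ‖g i ω‖ ≤ C)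
    (hs_meas : ∀ i, AEStronglyMeasurable (s i) μ)
    (hs_sq_int : ∀ i, Integrable (fun ω => ‖s i ω‖ ^ 2) μ)
    (hdesc : ∀ i, ∀ᵐ ω ∂μ, ⟪g i ω, (μ[s i|m]) ω⟫ ≤ -K₆ * ‖g i ω‖ ^ 2)
    (hsq : ∀ i, ∀ᵐ ω ∂μ,
      (μ[fun ω' => ‖s i ω'‖ ^ 2|m]) ω ≤ K₇ * ‖g i ω‖ ^ 2 + K₈)
    (b : Ω → ℝ) (hb : b = fun ω => ∑ i, ‖s i ω‖)
    (G : Ω → ℝ) (hG : G = fun ω => -∑ i, α i * ⟪g i ω, s i ω⟫) :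
    ∀ᵐ ω ∂μ, (μ[fun ω' => (b ω') ^ 2|m]) ω
      ≤ ((k : ℝ) * K₇ / (lam * K₆)) * (μ[G|m]) ω + (k : ℝ) ^ 2 * K₈ := by
  subst hb hG
  choose C hC using hg_bdd
  have hs_L2 : ∀ i, MemLp (s i) 2 μ := fun i ↦
    (memLp_two_iff_integrable_sq_norm ((hs_meas i).mono hm)).2 (hs_sq_int i)
  have hG_cond : μ[fun ω ↦ -∑ i, α i * ⟪g i ω, s i ω⟫ | m]
      =ᵐ[μ] fun ω ↦ -∑ i, α i * ⟪g i ω, (μ[s i | m]) ω⟫ :=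
    (condExp_neg _ m).trans <| (condExp_sum_mul_inner_of_stronglyMeasurable_of_bound hm α hg_meas
      hC fun i ↦ (hs_L2 i).integrable one_le_two).neg
  filter_upwards [condExp_sq_sum_le_card_mul_sum fun i ↦ (hs_L2 i).norm, hG_cond,
    ae_all_iff.2 hsq, ae_all_iff.2 hdesc] with ω hb_ω hG_ω hsq_ω hdesc_ω
  rw [hG_ω]
  simpa using hb_ω.trans (card_mul_sum_le_of_descent hlam hα hK₆ hK₇ (fun i ↦ sq_nonneg ‖g i ω‖)
    hsq_ω hdesc_ω)

/-- Lemma 1.0(b) of the paper: under the stochastic descent conditions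
`⟪g i, E[s i ∣ 𝒢]⟫ ≤ -K₆ ‖g i‖²` and `E[‖s i‖² ∣ 𝒢] ≤ K₇ ‖g i‖² + K₈` (a.s.),
with gossip weights `α i ≥ λ > 0`, setting `b = ∑ i ‖s i‖` and
`G = -∑ i α i ⟪g i, s i⟫`, one has a.s.
`E[b² ∣ 𝒢] ≤ (k K₇ / (λ K₆)) E[G ∣ 𝒢] + k² K₈`. -/
theorem condexp_square_update_bound
    {Ω : Type*} {mΩ : MeasurableSpace Ω} (μ : Measure Ω) [IsProbabilityMeasure μ]
    (m : MeasurableSpace Ω) (hm : m ≤ mΩ)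
    {d : ℕ} (k : ℕ) (hk : 1 ≤ k)
    (g s : Fin k → Ω → EuclideanSpace ℝ (Fin d))
    (α : Fin k → ℝ) (lam K₆ K₇ K₈ : ℝ)
    (hlam : 0 < lam) (hα : ∀ i, lam ≤ α i)
    (hK₆ : 0 < K₆) (hK₇ : 0 ≤ K₇) (hK₈ : 0 ≤ K₈)
    (hg_meas : ∀ i, StronglyMeasurable[m] (g i))
    (hg_bdd : ∀ i, ∃ C : ℝ, ∀ ω, ‖g i ω‖ ≤ C)
    (hs_meas : ∀ i, AEStronglyMeasurable (s i) μ)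
    (hs_sq_int : ∀ i, Integrable (fun ω => ‖s i ω‖ ^ 2) μ)
    (hdesc : ∀ i, ∀ᵐ ω ∂μ, ⟪g i ω, (μ[s i|m]) ω⟫ ≤ -K₆ * ‖g i ω‖ ^ 2)
    (hsq : ∀ i, ∀ᵐ ω ∂μ,
      (μ[fun ω' => ‖s i ω'‖ ^ 2|m]) ω ≤ K₇ * ‖g i ω‖ ^ 2 + K₈)
    (b : Ω → ℝ) (hb : b = fun ω => ∑ i, ‖s i ω‖)
    (G : Ω → ℝ) (hG : G = fun ω => -∑ i, α i * ⟪g i ω, s i ω⟫) :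
    ∀ᵐ ω ∂μ, (μ[fun ω' => (b ω') ^ 2|m]) ω
      ≤ ((k : ℝ) * K₇ / (lam * K₆)) * (μ[G|m]) ω + (k : ℝ) ^ 2 * K₈ :=
  condexp_square_update_bound_general μ m hm k g s α lam K₆ K₇ K₈ hlam hα hK₆ hK₇ hg_meas hg_bdd
    hs_meas hs_sq_int hdesc hsq b hb G hG
end

section
/- Let E = EuclideanSpace ℝ (Fin m) and let J : E → ℝ be differentiable with gradient ∇J satisfying ‖∇J(u) − ∇J(v)‖ ≤ K₁‖u − v‖ for all u, v (so in particular J(w₁+w₂) ≤ J(w₁) + ⟪∇J(w₁), w₂⟫ + (K₁/2)‖w₂‖²). Fix t ≥ 1, constants A > 0 and ρ ∈ (0,1), coefficients α_i ∈ [0,1] for i ∈ {1,…,k}, vectors s_i^τ ∈ E for 1 ≤ τ ≤ t, and vectors W_i^{t+1}, 𝒲^t, 𝒲^{t+1} ∈ E with 𝒲^{t+1} = 𝒲^t + (1/t) Σ_{i=1}^k α_i s_i^t. Define b^τ = Σ_{i=1}^k ‖s_i^τ‖ and G^t = −Σ_{i=1}^k α_i ⟪∇J(W_i^{t+1}), s_i^t⟫,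 and suppose ‖𝒲^{t+1} − W_i^{t+1}‖ ≤ A Σ_{τ=1}^{t} (1/τ) ρ^{t−τ} b^τ for every i. Then J(𝒲^{t+1}) ≤ J(𝒲^t) − (1/t) G^t + A₃ Σ_{τ=1}^{t} ρ^{t−τ} (b^τ)²/τ², where A₃ = K₁A/(1−ρ) + K₁/2. -/
/-!
The step `𝒲^{t+1} - 𝒲^t = (1/t) ∑ α_i s_i^t` is controlled by the descent lemma with the gradient
taken at the end point `𝒲^{t+1}`; it follows from the monotonicity of
`θ ↦ J (x + θ d) - θ ⟪∇J (x + d), d⟫ + K ‖d‖² (1 - θ)² / 2` on `[0, 1]`. Replacing `∇J(𝒲^{t+1})` by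
`∇J(W_i^{t+1})` costs `K₁ ‖𝒲^{t+1} - W_i^{t+1}‖ ‖s_i^t‖`, which the disagreement bound controls.
The resulting cross term `(∑_τ ρ^{t-τ} b^τ/τ) (b^t/t)` is split by AM-GM, and the geometric
weights `ρ^{t-τ}` sum to at most `1/(1-ρ)`.
-/

open RealInnerProductSpace

section Descent

variable {F : Type*} [NormedAddCommGroup F] [InnerProductSpace ℝ F] [CompleteSpace F]

theorem apply_add_le_of_lipschitz_gradient {J : F → ℝ} {gradJ : F → F} {K : ℝ}
    (hgrad : ∀ x, HasGradientAt J (gradJ x) x)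
    (hLip : ∀ u v, ‖gradJ u - gradJ v‖ ≤ K * ‖u - v‖) (x d : F) :
    J (x + d) ≤ J x + ⟪gradJ (x + d), d⟫ + K / 2 * ‖d‖ ^ 2 := by
  set φ : ℝ → ℝ := fun θ =>
    J (x + θ • d) - θ * ⟪gradJ (x + d), d⟫ + K / 2 * ‖d‖ ^ 2 * (1 - θ) ^ 2
  set φ' : ℝ → ℝ := fun θ =>
    ⟪gradJ (x + θ • d) - gradJ (x + d), d⟫ - K * ‖d‖ ^ 2 * (1 - θ)
  have hφ : ∀ θ, HasDerivAt φ (φ' θ) θ := by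
    intro θ
    have hline : HasDerivAt (fun θ : ℝ => x + θ • d) d θ := by
      simpa using ((hasDerivAt_id θ).smul_const d).const_add x
    have hJ := ((hgrad (x + θ • d)).hasFDerivAt.comp_hasDerivAt θ hline)
    refine ((hJ.sub ((hasDerivAt_id θ).mul_const ⟪gradJ (x + d), d⟫)).add
      ((((hasDerivAt_id θ).const_sub 1).pow 2).const_mul (K / 2 * ‖d‖ ^ 2))).congr_deriv ?_
    simp only [φ', InnerProductSpace.toDual_apply_apply, inner_sub_left, id]
    ring
  have hφ' : ∀ θ ∈ Set.Icc (0 : ℝ) 1, φ' θ ≤ 0 := by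
    intro θ ⟨h0, h1⟩
    refine sub_nonpos.2 ?_
    have hdist : ‖x + θ • d - (x + d)‖ = (1 - θ) * ‖d‖ := by
      rw [show x + θ • d - (x + d) = (θ - 1) • d by module, norm_smul, Real.norm_eq_abs,
        abs_of_nonpos (by linarith), neg_sub]
    calc ⟪gradJ (x + θ • d) - gradJ (x + d), d⟫
        ≤ ‖gradJ (x + θ • d) - gradJ (x + d)‖ * ‖d‖ := real_inner_le_norm _ _
      _ ≤ K * ((1 - θ) * ‖d‖) * ‖d‖ := by
          gcongr
          exact hdist ▸ hLip _ _
      _ = K * ‖d‖ ^ 2 * (1 - θ) := by ring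
  have hanti : AntitoneOn φ (Set.Icc 0 1) :=
    antitoneOn_of_hasDerivWithinAt_nonpos (convex_Icc 0 1)
      (fun θ _ => (hφ θ).continuousAt.continuousWithinAt)
      (fun θ _ => (hφ θ).hasDerivWithinAt)
      (fun θ hθ => hφ' θ (interior_subset hθ))
  have := hanti (by simp) (by simp) zero_le_one
  simp only [φ, zero_smul, one_smul, add_zero] at this
  linarith

end Descent

section WeightedSums

variable {ι : Type*} {s : Finset ι} {w : ι → ℝ} {j : ι}

lemma sq_le_sum_mul_sq (c : ι → ℝ) (hw : ∀ i ∈ s, 0 ≤ w i) (hj : j ∈ s) (hwj : 1 ≤ w j) :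
    c j ^ 2 ≤ ∑ i ∈ s, w i * c i ^ 2 :=
  calc c j ^ 2 ≤ w j * c j ^ 2 := le_mul_of_one_le_left (sq_nonneg _) hwj
    _ ≤ ∑ i ∈ s, w i * c i ^ 2 :=
      Finset.single_le_sum (fun i hi => mul_nonneg (hw i hi) (sq_nonneg _)) hj

lemma sum_mul_mul_le (c : ι → ℝ) (hw : ∀ i ∈ s, 0 ≤ w i) (hj : j ∈ s) (hwj : 1 ≤ w j) :
    (∑ i ∈ s, w i * c i) * c j ≤ (∑ i ∈ s, w i + 1) / 2 * ∑ i ∈ s, w i * c i ^ 2 := by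
  have hcj := sq_le_sum_mul_sq c hw hj hwj
  have hW : 0 ≤ ∑ i ∈ s, w i := Finset.sum_nonneg hw
  calc (∑ i ∈ s, w i * c i) * c j ≤ ∑ i ∈ s, w i * ((c i ^ 2 + c j ^ 2) / 2) := by
        rw [Finset.sum_mul]
        refine Finset.sum_le_sum fun i hi => ?_
        rw [mul_assoc]
        exact mul_le_mul_of_nonneg_left (by nlinarith [sq_nonneg (c i - c j)]) (hw i hi)
    _ = (∑ i ∈ s, w i * c i ^ 2) / 2 + (∑ i ∈ s, w i) * c j ^ 2 / 2 := by
        rw [Finset.sum_div, Finset.sum_mul, Finset.sum_div, ← Finset.sum_add_distrib]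
        exact Finset.sum_congr rfl fun i _ => by ring
    _ ≤ (∑ i ∈ s, w i + 1) / 2 * ∑ i ∈ s, w i * c i ^ 2 := by nlinarith

end WeightedSums

section Geometric

variable {ρ : ℝ}

lemma sum_Icc_pow_sub_le (hρ0 : 0 ≤ ρ) (hρ1 : ρ < 1) (a t : ℕ) :
    ∑ τ ∈ Finset.Icc a t, ρ ^ (t - τ) ≤ 1 / (1 - ρ) :=
  calc ∑ τ ∈ Finset.Icc a t, ρ ^ (t - τ) ≤ ∑ τ ∈ Finset.range (t + 1), ρ ^ (t - τ) :=
        Finset.sum_le_sum_of_subset_of_nonneg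
          (fun τ hτ => by simp only [Finset.mem_Icc, Finset.mem_range] at hτ ⊢; omega)
          fun _ _ _ => pow_nonneg hρ0 _
    _ = ∑ j ∈ Finset.range (t + 1), ρ ^ j := by
        simpa using Finset.sum_range_reflect (ρ ^ ·) (t + 1)
    _ ≤ 1 / (1 - ρ) := by
        simpa only [← Finset.range_eq_Ico, pow_zero] using
          geom_sum_Ico_le_of_lt_one (m := 0) (n := t + 1) hρ0 hρ1

lemma geometric_sum_mul_le (hρ0 : 0 ≤ ρ) (hρ1 : ρ < 1) {t : ℕ} (ht : 1 ≤ t) (c : ℕ → ℝ) :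
    (∑ τ ∈ Finset.Icc 1 t, ρ ^ (t - τ) * c τ) * c t ≤
      1 / (1 - ρ) * ∑ τ ∈ Finset.Icc 1 t, ρ ^ (t - τ) * c τ ^ 2 := by
  have hw : ∀ τ ∈ Finset.Icc 1 t, 0 ≤ ρ ^ (t - τ) := fun _ _ => pow_nonneg hρ0 _
  have hwt : 1 ≤ ρ ^ (t - t) := by simp
  have hone : 1 ≤ 1 / (1 - ρ) := by rw [le_div_iff₀ (by linarith)]; linarith
  refine (sum_mul_mul_le c hw (Finset.right_mem_Icc.2 ht) hwt).trans <|
    mul_le_mul_of_nonneg_right (by linarith [sum_Icc_pow_sub_le hρ0 hρ1 1 t])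
    (Finset.sum_nonneg fun τ hτ => mul_nonneg (hw τ hτ) (sq_nonneg _))

end Geometric

section Steps

variable {F : Type*} [NormedAddCommGroup F] [InnerProductSpace ℝ F]
variable {ι : Type*} {s : Finset ι} {α : ι → ℝ}

lemma norm_sum_smul_le (hα : ∀ i ∈ s, α i ∈ Set.Icc (0 : ℝ) 1) (v : ι → F) :
    ‖∑ i ∈ s, α i • v i‖ ≤ ∑ i ∈ s, ‖v i‖ :=
  (norm_sum_le _ _).trans <| Finset.sum_le_sum fun i hi => by
    rw [norm_smul, Real.norm_of_nonneg (hα i hi).1]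
    exact mul_le_of_le_one_left (norm_nonneg _) (hα i hi).2

lemma sum_mul_inner_le (hα : ∀ i ∈ s, α i ∈ Set.Icc (0 : ℝ) 1) {u v : ι → F} {B : ℝ}
    (hu : ∀ i ∈ s, ‖u i‖ ≤ B) : ∑ i ∈ s, α i * ⟪u i, v i⟫ ≤ B * ∑ i ∈ s, ‖v i‖ := by
  rw [Finset.mul_sum]
  refine Finset.sum_le_sum fun i hi => ?_
  obtain ⟨hα0, hα1⟩ := hα i hi
  have hB : 0 ≤ B := (norm_nonneg _).trans (hu i hi)
  calc α i * ⟪u i, v i⟫ ≤ α i * (B * ‖v i‖) := by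
        gcongr
        exact (real_inner_le_norm _ _).trans (by gcongr; exact hu i hi)
    _ ≤ B * ‖v i‖ := mul_le_of_le_one_left (by positivity) hα1

lemma inner_sum_smul_le (hα : ∀ i ∈ s, α i ∈ Set.Icc (0 : ℝ) 1) (g : F) {g' v : ι → F} {B : ℝ}
    (hg : ∀ i ∈ s, ‖g - g' i‖ ≤ B) :
    ⟪g, ∑ i ∈ s, α i • v i⟫ ≤ ∑ i ∈ s, α i * ⟪g' i, v i⟫ + B * ∑ i ∈ s, ‖v i‖ := by
  have h := sum_mul_inner_le hα (v := v) hg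
  simp only [inner_sum, real_inner_smul_right, inner_sub_left, mul_sub,
    Finset.sum_sub_distrib] at h ⊢
  linarith

lemma apply_add_smul_sum_smul_le [CompleteSpace F] {J : F → ℝ} {gradJ : F → F} {K : ℝ}
    (hK : 0 ≤ K) (hgrad : ∀ x, HasGradientAt J (gradJ x) x)
    (hLip : ∀ u v, ‖gradJ u - gradJ v‖ ≤ K * ‖u - v‖) (hα : ∀ i ∈ s, α i ∈ Set.Icc (0 : ℝ) 1)
    (x : F) {r : ℝ} (hr : 0 ≤ r) (v g' : ι → F) {B : ℝ}
    (hg' : ∀ i ∈ s, ‖gradJ (x + r • ∑ i ∈ s, α i • v i) - g' i‖ ≤ B) :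
    J (x + r • ∑ i ∈ s, α i • v i) ≤ J x + r * ∑ i ∈ s, α i * ⟪g' i, v i⟫ +
      B * (r * ∑ i ∈ s, ‖v i‖) + K / 2 * (r * ∑ i ∈ s, ‖v i‖) ^ 2 := by
  set d := r • ∑ i ∈ s, α i • v i
  have hinner : ⟪gradJ (x + d), d⟫ ≤
      r * (∑ i ∈ s, α i * ⟪g' i, v i⟫ + B * ∑ i ∈ s, ‖v i‖) := by
    rw [real_inner_smul_right]
    exact mul_le_mul_of_nonneg_left (inner_sum_smul_le hα _ hg') hr
  have hnorm : ‖d‖ ≤ r * ∑ i ∈ s, ‖v i‖ := by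
    rw [norm_smul, Real.norm_of_nonneg hr]
    exact mul_le_mul_of_nonneg_left (norm_sum_smul_le hα v) hr
  have := apply_add_le_of_lipschitz_gradient hgrad hLip x d
  have : K / 2 * ‖d‖ ^ 2 ≤ K / 2 * (r * ∑ i ∈ s, ‖v i‖) ^ 2 := by gcongr
  linarith

end Steps

/-- The key one-step descent inequality (Equation (ineql1)) in the convergence proof
of the DFE algorithm: with `K₁`-Lipschitz gradient, agreement-vector update
`𝒲^{t+1} = 𝒲^t + (1/t) ∑ i α i • s i t`, `b τ = ∑ i ‖s τ i‖`,
`G^t = -∑ i α i ⟪∇J(W i^{t+1}), s i t⟫`, and disagreement bound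
`‖𝒲^{t+1} - W i^{t+1}‖ ≤ A ∑_{τ=1}^{t} (1/τ) ρ^(t-τ) b τ`, one has
`J(𝒲^{t+1}) ≤ J(𝒲^t) - (1/t) G^t + A₃ ∑_{τ=1}^{t} ρ^(t-τ) (b τ)²/τ²`
with `A₃ = K₁ A/(1-ρ) + K₁/2`. -/
theorem one_step_descent_inequality
    {m : ℕ} (J : EuclideanSpace ℝ (Fin m) → ℝ)
    (gradJ : EuclideanSpace ℝ (Fin m) → EuclideanSpace ℝ (Fin m))
    (K₁ : ℝ) (hK₁ : 0 ≤ K₁)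
    (hgrad : ∀ x, HasGradientAt J (gradJ x) x)
    (hLip : ∀ u v, ‖gradJ u - gradJ v‖ ≤ K₁ * ‖u - v‖)
    (k t : ℕ) (ht : 1 ≤ t)
    (A ρ : ℝ) (hA : 0 < A) (hρ : ρ ∈ Set.Ioo (0 : ℝ) 1)
    (α : Fin k → ℝ) (hα : ∀ i, α i ∈ Set.Icc (0 : ℝ) 1)
    (s : ℕ → Fin k → EuclideanSpace ℝ (Fin m))
    (W : Fin k → EuclideanSpace ℝ (Fin m))  -- the local iterates `W i^{t+1}`
    (Wb Wb' : EuclideanSpace ℝ (Fin m))     -- `𝒲^t` and `𝒲^{t+1}`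
    (hWb' : Wb' = Wb + ((1 : ℝ) / (t : ℝ)) • ∑ i, α i • s t i)
    (b : ℕ → ℝ) (hb : ∀ τ, b τ = ∑ i, ‖s τ i‖)
    (G : ℝ) (hG : G = -∑ i, α i * ⟪gradJ (W i), s t i⟫)
    (hdis : ∀ i, ‖Wb' - W i‖ ≤
      A * ∑ τ ∈ Finset.Icc 1 t, (1 / (τ : ℝ)) * ρ ^ (t - τ) * b τ) :
    J Wb' ≤ J Wb - (1 / (t : ℝ)) * G +
      (K₁ * A / (1 - ρ) + K₁ / 2) *
        ∑ τ ∈ Finset.Icc 1 t, ρ ^ (t - τ) * (b τ) ^ 2 / (τ : ℝ) ^ 2 := by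
  obtain ⟨hρ0, hρ1⟩ := hρ
  set c : ℕ → ℝ := fun τ => b τ / τ
  set S := ∑ τ ∈ Finset.Icc 1 t, ρ ^ (t - τ) * c τ
  set T := ∑ τ ∈ Finset.Icc 1 t, ρ ^ (t - τ) * c τ ^ 2
  rw [show ∑ τ ∈ Finset.Icc 1 t, (1 / (τ : ℝ)) * ρ ^ (t - τ) * b τ = S from
    Finset.sum_congr rfl fun τ _ => by ring] at hdis
  rw [show ∑ τ ∈ Finset.Icc 1 t, ρ ^ (t - τ) * (b τ) ^ 2 / (τ : ℝ) ^ 2 = T from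
    Finset.sum_congr rfl fun τ _ => by ring]
  have hnorm : 1 / (t : ℝ) * ∑ i, ‖s t i‖ = c t := by rw [← hb]; ring
  have hstep := apply_add_smul_sum_smul_le hK₁ hgrad hLip (fun i _ => hα i) Wb
    (r := 1 / (t : ℝ)) (by positivity) (s t) (fun i => gradJ (W i))
    fun i _ => hWb' ▸ (hLip _ _).trans (mul_le_mul_of_nonneg_left (hdis i) hK₁)
  rw [← hWb', hnorm] at hstep
  have hcross : S * c t ≤ 1 / (1 - ρ) * T := geometric_sum_mul_le hρ0.le hρ1 ht c
  have hct : c t ^ 2 ≤ T := sq_le_sum_mul_sq c (fun _ _ => pow_nonneg hρ0.le _)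
    (Finset.right_mem_Icc.2 ht) (by rw [Nat.sub_self, pow_zero])
  calc J Wb' ≤ J Wb - 1 / t * G + K₁ * A * (S * c t) + K₁ / 2 * c t ^ 2 := by
        rw [hG]; linarith
    _ ≤ J Wb - 1 / t * G + K₁ * A * (1 / (1 - ρ) * T) + K₁ / 2 * T := by
        gcongr
    _ = J Wb - 1 / t * G + (K₁ * A / (1 - ρ) + K₁ / 2) * T := by ring
end

section
/- Let ρ ∈ (0,1) and A₁, A₂, A₃ ≥ 0 be constants, and let (j_t)_{t≥1} and (g_t)_{t≥1} be sequences of nonnegative real numbers such that for every t ≥ 1: j_{t+1} ≤ j_t − (1/t) g_t + A₃ Σ_{τ=1}^{t} ρ^{t−τ} (1/τ²)(A₁ g_τ + A₂). Then Σ_{t=1}^∞ (1/t) g_t < ∞. -/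
private lemma swap_geom_bound (ρ : ℝ) (h0 : 0 ≤ ρ) (h1 : ρ < 1) (h : ℕ → ℝ)
    (hh : ∀ τ, 0 ≤ h τ) (T : ℕ) :
    ∑ t ∈ Finset.Icc 1 T, ∑ τ ∈ Finset.Icc 1 t, ρ ^ (t - τ) * h τ ≤
      (1 - ρ)⁻¹ * ∑ τ ∈ Finset.Icc 1 T, h τ := by
  have swap := Finset.sum_Ico_Ico_comm 1 (T + 1) (fun τ t => ρ ^ (t - τ) * h τ)
  have e1 : ∑ t ∈ Finset.Icc 1 T, ∑ τ ∈ Finset.Icc 1 t, ρ ^ (t - τ) * h τ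
      = ∑ τ ∈ Finset.Ico 1 (T+1), ∑ t ∈ Finset.Ico τ (T+1), ρ ^ (t - τ) * h τ := by
    rw [swap]
    apply Finset.sum_congr (by rw [Finset.Ico_add_one_right_eq_Icc]) (fun t _ => ?_)
    rw [Finset.Ico_add_one_right_eq_Icc]
  rw [e1, ← Finset.Ico_add_one_right_eq_Icc 1 T, Finset.mul_sum]
  apply Finset.sum_le_sum
  intro τ hτ
  rw [Finset.sum_Ico_eq_sum_range]
  have : ∀ i ∈ Finset.range (T + 1 - τ), ρ ^ (τ + i - τ) * h τ = ρ ^ i * h τ := by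
    intro i _; congr 2; omega
  rw [Finset.sum_congr rfl this, ← Finset.sum_mul, mul_comm ((1-ρ)⁻¹) (h τ), mul_comm _ (h τ)]
  apply mul_le_mul_of_nonneg_left _ (hh τ)
  calc ∑ i ∈ Finset.range (T + 1 - τ), ρ ^ i ≤ ∑' i : ℕ, ρ ^ i :=
        Summable.sum_le_tsum _ (fun i _ => pow_nonneg h0 i) (summable_geometric_of_lt_one h0 h1)
    _ = (1 - ρ)⁻¹ := tsum_geometric_of_lt_one h0 h1

private lemma sum_inv_sq_le_two (T : ℕ) : ∑ τ ∈ Finset.Icc 1 T, (1 / (τ:ℝ)^2) ≤ 2 := by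
  rcases Nat.eq_zero_or_pos T with rfl | hT
  · simp
  have : ∑ τ ∈ Finset.Icc 1 T, (1 / (τ:ℝ)^2) ≤ 2 - 1/(T:ℝ) := by
    induction T, hT using Nat.le_induction with
    | base => norm_num
    | succ T hT ih =>
      rw [Finset.sum_Icc_succ_top (by omega)]
      have h1 : (1:ℝ) ≤ T := by exact_mod_cast hT
      have h2 : (0:ℝ) < T := by linarith
      have h3 : (0:ℝ) < T + 1 := by linarith
      have key : (1 / ((T:ℝ)+1)^2) ≤ 1/(T:ℝ) - 1/((T:ℝ)+1) := by
        rw [div_sub_div _ _ (ne_of_gt h2) (ne_of_gt h3),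
          div_le_div_iff₀ (by positivity) (by positivity)]
        nlinarith
      push_cast
      linarith
  have hT' : (0:ℝ) < T := by exact_mod_cast hT
  have : 1/(T:ℝ) > 0 := by positivity
  linarith

set_option maxHeartbeats 1000000 in
/-- Lemma 3.0 of the paper, at the level of real sequences: if nonnegative sequences
`j` and `g` satisfy
`j (t+1) ≤ j t - (1/t) g t + A₃ ∑_{τ=1}^{t} ρ^(t-τ) (1/τ²) (A₁ g τ + A₂)` for all
`t ≥ 1`, with `ρ ∈ (0,1)` and `A₁, A₂, A₃ ≥ 0`, then `∑_{t≥1} (1/t) g t < ∞`. -/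
theorem sum_weighted_descent_terms_finite
    (ρ A₁ A₂ A₃ : ℝ) (hρ : ρ ∈ Set.Ioo (0 : ℝ) 1)
    (hA₁ : 0 ≤ A₁) (hA₂ : 0 ≤ A₂) (hA₃ : 0 ≤ A₃)
    (j g : ℕ → ℝ) (hj : ∀ t, 0 ≤ j t) (hg : ∀ t, 0 ≤ g t)
    (hrec : ∀ t, 1 ≤ t → j (t + 1) ≤ j t - (1 / (t : ℝ)) * g t +
      A₃ * ∑ τ ∈ Finset.Icc 1 t, ρ ^ (t - τ) * (1 / (τ : ℝ) ^ 2) * (A₁ * g τ + A₂)) :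
    Summable (fun t : ℕ => (1 / (t : ℝ)) * g t) := by
  obtain ⟨hρ0, hρ1⟩ := hρ
  set f : ℕ → ℝ := fun t => (1 / (t : ℝ)) * g t with hfdef
  have hf0 : ∀ t, 0 ≤ f t := fun t => mul_nonneg (by positivity) (hg t)
  set h : ℕ → ℝ := fun τ => (1 / (τ : ℝ)^2) * (A₁ * g τ + A₂) with hhdef
  have hh0 : ∀ τ, 0 ≤ h τ := fun τ => by
    apply mul_nonneg (by positivity)
    have := hg τ; nlinarith
  clear_value f h
  -- Step A: telescoping
  have telA : ∀ T, 1 ≤ T → j (T+1) + ∑ t ∈ Finset.Icc 1 T, f t ≤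
      j 1 + A₃ * ∑ t ∈ Finset.Icc 1 T, ∑ τ ∈ Finset.Icc 1 t, ρ ^ (t - τ) * h τ := by
    intro T hT
    induction T, hT using Nat.le_induction with
    | base =>
      have := hrec 1 le_rfl
      simp only [Finset.Icc_self, Finset.sum_singleton] at this ⊢
      simp only [hhdef, hfdef]
      push_cast at this ⊢
      nlinarith [this]
    | succ T hT ih =>
      have hr := hrec (T+1) (by omega)
      have e2 : ∀ t : ℕ, (∑ τ ∈ Finset.Icc 1 t, ρ ^ (t - τ) * (1 / (τ : ℝ) ^ 2) * (A₁ * g τ + A₂))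
          = ∑ τ ∈ Finset.Icc 1 t, ρ ^ (t - τ) * h τ := by
        intro t; apply Finset.sum_congr rfl; intro τ _; simp only [hhdef]; ring
      rw [e2] at hr
      rw [Finset.sum_Icc_succ_top (by omega : 1 ≤ T + 1),
        Finset.sum_Icc_succ_top (by omega : 1 ≤ T + 1), mul_add]
      have hfe : f (T+1) = (1 / ((T:ℝ)+1)) * g (T+1) := by simp only [hfdef]; push_cast; ring
      have hA₃s : 0 ≤ A₃ * ∑ τ ∈ Finset.Icc 1 (T+1), ρ ^ (T+1 - τ) * h τ := by
        apply mul_nonneg hA₃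
        apply Finset.sum_nonneg
        intro τ _; exact mul_nonneg (pow_nonneg hρ0.le _) (hh0 τ)
      push_cast at hr
      linarith [ih, hr, hfe ▸ le_refl (f (T+1))]
  -- main bound on partial sums
  set c : ℝ := A₃ * (1 - ρ)⁻¹ * A₁ with hcdef
  have hinv : (0:ℝ) < (1 - ρ)⁻¹ := by
    apply inv_pos.mpr; linarith
  have hc0 : 0 ≤ c := by positivity
  set N : ℕ := ⌈2 * c⌉₊ + 1 with hNdef
  set B : ℝ := ∑ τ ∈ Finset.range N, c * g τ with hBdef
  have hB0 : 0 ≤ B := Finset.sum_nonneg fun τ _ => mul_nonneg hc0 (hg τ)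
  set C : ℝ := 2 * (j 1 + B + 2 * A₂ * (A₃ * (1 - ρ)⁻¹)) with hCdef
  have hC0 : 0 ≤ C := by
    have h1 := hj 1
    have h2 : 0 ≤ 2 * A₂ * (A₃ * (1 - ρ)⁻¹) := by positivity
    rw [hCdef]; linarith
  clear_value c N B C
  have main : ∀ T, 1 ≤ T → ∑ t ∈ Finset.Icc 1 T, f t ≤ C := by
    intro T hT
    have step1 : ∑ t ∈ Finset.Icc 1 T, f t ≤
        j 1 + A₃ * ((1 - ρ)⁻¹ * ∑ τ ∈ Finset.Icc 1 T, h τ) := by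
      have := telA T hT
      have hb := swap_geom_bound ρ hρ0.le hρ1 h hh0 T
      nlinarith [hj (T+1)]
    -- bound ∑ h τ
    have step2 : ∑ τ ∈ Finset.Icc 1 T, h τ ≤
        A₁ * ∑ τ ∈ Finset.Icc 1 T, (1 / (τ:ℝ)^2) * g τ + 2 * A₂ := by
      have : ∑ τ ∈ Finset.Icc 1 T, h τ =
          A₁ * ∑ τ ∈ Finset.Icc 1 T, (1 / (τ:ℝ)^2) * g τ
            + A₂ * ∑ τ ∈ Finset.Icc 1 T, (1 / (τ:ℝ)^2) := by
        rw [Finset.mul_sum, Finset.mul_sum, ← Finset.sum_add_distrib]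
        apply Finset.sum_congr rfl; intro τ _; simp only [hhdef]; ring
      rw [this]
      have := sum_inv_sq_le_two T
      nlinarith
    -- absorb the g/τ² sum
    have step3 : c * ∑ τ ∈ Finset.Icc 1 T, (1 / (τ:ℝ)^2) * g τ ≤
        (1/2) * ∑ t ∈ Finset.Icc 1 T, f t + B := by
      rw [Finset.mul_sum]
      have termwise : ∀ τ ∈ Finset.Icc 1 T,
          c * ((1 / (τ:ℝ)^2) * g τ) ≤ (1/2) * f τ + (if τ < N then c * g τ else 0) := by
        intro τ hτ
        rw [Finset.mem_Icc] at hτ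
        have hτ1 : (1:ℝ) ≤ τ := by exact_mod_cast hτ.1
        have hτpos : (0:ℝ) < τ := by linarith
        by_cases hlt : τ < N
        · rw [if_pos hlt]
          have h1 : c * ((1 / (τ:ℝ)^2) * g τ) ≤ c * g τ := by
            apply mul_le_mul_of_nonneg_left _ hc0
            have hsq : (0:ℝ) < (τ:ℝ)^2 := pow_pos hτpos 2
            have : (1 / (τ:ℝ)^2) ≤ 1 := by
              rw [div_le_one hsq]; nlinarith
            nlinarith [hg τ]
          have : 0 ≤ (1/2) * f τ := by have := hf0 τ; linarith
          linarith
        · rw [if_neg hlt]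
          push_neg at hlt
          have hτN : (N:ℝ) ≤ τ := by exact_mod_cast hlt
          have h2c : 2 * c ≤ (τ:ℝ) := by
            have : 2 * c ≤ (⌈2*c⌉₊ : ℝ) := Nat.le_ceil _
            have : ((⌈2*c⌉₊ : ℕ) : ℝ) + 1 = (N:ℝ) := by rw [hNdef]; push_cast; ring
            have hN' : (⌈2*c⌉₊ : ℝ) ≤ (N:ℝ) := by rw [← this]; linarith
            linarith [Nat.le_ceil (2*c)]
          have hfτ : f τ = (1/(τ:ℝ)) * g τ := by simp only [hfdef]
          rw [hfτ]
          have h5 : c * (1 / (τ:ℝ)^2) ≤ (1/2) * (1/(τ:ℝ)) := by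
            rw [mul_one_div, mul_one_div, div_le_div_iff₀ (pow_pos hτpos 2) hτpos]
            nlinarith
          have key : c * ((1 / (τ:ℝ)^2) * g τ) ≤ (1/2) * ((1/(τ:ℝ)) * g τ) := by
            calc c * ((1 / (τ:ℝ)^2) * g τ) = (c * (1 / (τ:ℝ)^2)) * g τ := by ring
              _ ≤ ((1/2) * (1/(τ:ℝ))) * g τ := mul_le_mul_of_nonneg_right h5 (hg τ)
              _ = (1/2) * ((1/(τ:ℝ)) * g τ) := by ring
          linarith
      calc ∑ τ ∈ Finset.Icc 1 T, c * ((1 / (τ:ℝ)^2) * g τ)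
          ≤ ∑ τ ∈ Finset.Icc 1 T, ((1/2) * f τ + (if τ < N then c * g τ else 0)) :=
            Finset.sum_le_sum termwise
        _ = (1/2) * ∑ t ∈ Finset.Icc 1 T, f t
              + ∑ τ ∈ Finset.Icc 1 T, (if τ < N then c * g τ else 0) := by
            rw [Finset.sum_add_distrib, Finset.mul_sum]
        _ ≤ (1/2) * ∑ t ∈ Finset.Icc 1 T, f t + B := by
            have : ∑ τ ∈ Finset.Icc 1 T, (if τ < N then c * g τ else 0) ≤ B := by
              rw [← Finset.sum_filter, hBdef]
              apply Finset.sum_le_sum_of_subset_of_nonneg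
              · intro x hx
                rw [Finset.mem_filter] at hx
                exact Finset.mem_range.mpr hx.2
              · intro τ _ _
                exact mul_nonneg hc0 (hg τ)
            linarith
    have expand : j 1 + A₃ * ((1 - ρ)⁻¹ * ∑ τ ∈ Finset.Icc 1 T, h τ) ≤
        j 1 + c * ∑ τ ∈ Finset.Icc 1 T, (1 / (τ:ℝ)^2) * g τ + 2 * A₂ * (A₃ * (1 - ρ)⁻¹) := by
      have hD : 0 ≤ A₃ * (1 - ρ)⁻¹ := by positivity
      have hmul := mul_le_mul_of_nonneg_left step2 hD
      have h6 : A₃ * ((1 - ρ)⁻¹ * ∑ τ ∈ Finset.Icc 1 T, h τ)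
          = (A₃ * (1 - ρ)⁻¹) * ∑ τ ∈ Finset.Icc 1 T, h τ := by ring
      have h7 : (A₃ * (1 - ρ)⁻¹) * (A₁ * ∑ τ ∈ Finset.Icc 1 T, (1 / (τ:ℝ)^2) * g τ + 2 * A₂)
          = c * ∑ τ ∈ Finset.Icc 1 T, (1 / (τ:ℝ)^2) * g τ + 2 * A₂ * (A₃ * (1 - ρ)⁻¹) := by
        rw [hcdef]; ring
      generalize hS1 : ∑ τ ∈ Finset.Icc 1 T, h τ = S1 at hmul h6 ⊢
      generalize hS2 : ∑ τ ∈ Finset.Icc 1 T, (1 / (τ:ℝ)^2) * g τ = S2 at hmul h7 ⊢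
      linarith only [hmul, h6, h7]
    have hCeq : C = 2 * (j 1 + B + 2 * A₂ * (A₃ * (1 - ρ)⁻¹)) := hCdef
    generalize hS : ∑ t ∈ Finset.Icc 1 T, f t = S at step1 step3 ⊢
    generalize hSh : ∑ τ ∈ Finset.Icc 1 T, h τ = Sh at step1 expand
    generalize hSg : ∑ τ ∈ Finset.Icc 1 T, (1 / (τ:ℝ)^2) * g τ = Sg at step3 expand
    linarith only [step1, step3, expand, hCeq]
  -- conclude
  apply summable_of_sum_range_le (c := C) hf0
  intro n
  rcases Nat.eq_zero_or_pos n with rfl | hn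
  · rw [Finset.sum_range_zero]
    exact hC0
  have hsplit : ∑ i ∈ Finset.range n, f i = ∑ i ∈ Finset.Icc 1 (n-1), f i := by
    rw [Finset.range_eq_Ico, Finset.sum_eq_sum_Ico_succ_bot hn]
    have hf00 : f 0 = 0 := by simp only [hfdef]; norm_num
    have : Finset.Ico (0+1) n = Finset.Icc 1 (n-1) := by
      rw [← Finset.Ico_add_one_right_eq_Icc]
      congr 1
      omega
    rw [hf00, this, zero_add]
  rw [hsplit]
  rcases Nat.lt_or_ge n 2 with h2 | h2
  · have : n - 1 = 0 := by omega
    rw [this]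
    rw [show Finset.Icc 1 0 = ∅ from Finset.Icc_eq_empty (by omega), Finset.sum_empty]
    exact hC0
  · exact main (n-1) (by omega)
end

section
/- Let (Ω, ℱ, P) be a probability space and (ℱ_t)_{t≥1} a filtration. Let (Y_t)_{t≥1} and (Z_t)_{t≥1} be sequences of nonnegative, integrable, adapted real random variables such that E[Y_{t+1} ∣ ℱ_t] ≤ Y_t + Z_t almost surely for every t, and Σ_{t=1}^∞ E[Z_t] < ∞. Then there exists a nonnegative random variable Y such that Y_t converges to Y almost surely. -/
/-!
With `S t = ∑ s < t, Z s`, the process `S t - Y t` is a submartingale bounded above by the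
nonnegative process `S`, whose expectations are bounded by `∑ E[Z s]`; hence it is bounded in
`L¹` and converges almost surely by Doob's convergence theorem. Summability of `E[Z s]` also makes
`∑ Z s ω` converge almost surely, and so `Y t = S t - (S t - Y t)` converges almost surely.
-/

open MeasureTheory Filter Finset
open scoped Topology ENNReal

namespace MeasureTheory

variable {Ω : Type*} {mΩ : MeasurableSpace Ω} {μ : Measure Ω} {ℱ : Filtration ℕ mΩ}

theorem Adapted.measurable_sum_range {Z : ℕ → Ω → ℝ} (hZ : Adapted ℱ Z) {s t : ℕ}
    (hst : s ≤ t + 1) : Measurable[ℱ t] fun ω => ∑ r ∈ range s, Z r ω :=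
  Finset.measurable_sum _ fun r hr => (hZ r).mono (ℱ.mono (by grind)) le_rfl

theorem submartingale_sum_range_sub [IsFiniteMeasure μ] {Y Z : ℕ → Ω → ℝ}
    (hY : Adapted ℱ Y) (hZ : Adapted ℱ Z) (hY_int : ∀ t, Integrable (Y t) μ)
    (hZ_int : ∀ t, Integrable (Z t) μ) (hcond : ∀ t, μ[Y (t + 1)|ℱ t] ≤ᵐ[μ] Y t + Z t) :
    Submartingale (fun t ω => ∑ s ∈ range t, Z s ω - Y t ω) ℱ μ := by
  have hS_int : ∀ t, Integrable (fun ω => ∑ s ∈ range t, Z s ω) μ := fun t =>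
    integrable_finsetSum _ fun s _ => hZ_int s
  refine submartingale_nat
    (fun t => ((hZ.measurable_sum_range t.le_succ).sub (hY t)).stronglyMeasurable)
    (fun t => (hS_int t).sub (hY_int t)) fun t => ?_
  have hS_condExp : μ[fun ω => ∑ s ∈ range (t + 1), Z s ω|ℱ t] =
      fun ω => ∑ s ∈ range (t + 1), Z s ω :=
    condExp_of_stronglyMeasurable (ℱ.le t)
      (hZ.measurable_sum_range le_rfl).stronglyMeasurable (hS_int (t + 1))
  filter_upwards [condExp_sub (m := ℱ t) (hS_int (t + 1)) (hY_int (t + 1)), hcond t]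
    with ω hsub hω
  simp only [Pi.sub_apply, Pi.add_apply, hS_condExp] at hsub hω
  change _ ≤ μ[(fun ω => ∑ s ∈ range (t + 1), Z s ω) - Y (t + 1)|ℱ t] ω
  rw [hsub, sum_range_succ]
  linarith

theorem Submartingale.eLpNorm_one_le_of_le_of_nonneg [IsFiniteMeasure μ]
    {f S : ℕ → Ω → ℝ} {C : ℝ} (hf : Submartingale f ℱ μ) (hfS : ∀ n ω, f n ω ≤ S n ω)
    (hS_nonneg : ∀ n ω, 0 ≤ S n ω) (hS_int : ∀ n, Integrable (S n) μ)
    (hSC : ∀ n, ∫ ω, S n ω ∂μ ≤ C) (n : ℕ) :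
    eLpNorm (f n) 1 μ ≤ ENNReal.ofReal (2 * C - ∫ ω, f 0 ω ∂μ) := by
  rw [eLpNorm_one_eq_lintegral_enorm, ← ofReal_integral_norm_eq_lintegral_enorm (hf.integrable n)]
  refine ENNReal.ofReal_le_ofReal ?_
  have hnorm_le : ∀ ω, ‖f n ω‖ ≤ 2 * S n ω - f n ω := fun ω => by
    rw [Real.norm_eq_abs, abs_le]
    constructor <;> linarith [hfS n ω, hS_nonneg n ω]
  have hf_mono : ∫ ω, f 0 ω ∂μ ≤ ∫ ω, f n ω ∂μ := by
    simpa only [setIntegral_univ] using hf.setIntegral_le n.zero_le MeasurableSet.univ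
  calc ∫ ω, ‖f n ω‖ ∂μ ≤ ∫ ω, 2 * S n ω - f n ω ∂μ :=
        integral_mono (hf.integrable n).norm
          (((hS_int n).const_mul 2).sub (hf.integrable n)) hnorm_le
    _ = 2 * ∫ ω, S n ω ∂μ - ∫ ω, f n ω ∂μ := by
        rw [integral_sub ((hS_int n).const_mul 2) (hf.integrable n), integral_const_mul]
    _ ≤ 2 * C - ∫ ω, f 0 ω ∂μ := by linarith [hSC n]

theorem Submartingale.exists_ae_tendsto_of_le_of_nonneg [IsFiniteMeasure μ]
    {f S : ℕ → Ω → ℝ} {C : ℝ} (hf : Submartingale f ℱ μ) (hfS : ∀ n ω, f n ω ≤ S n ω)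
    (hS_nonneg : ∀ n ω, 0 ≤ S n ω) (hS_int : ∀ n, Integrable (S n) μ)
    (hSC : ∀ n, ∫ ω, S n ω ∂μ ≤ C) :
    ∀ᵐ ω ∂μ, ∃ c, Tendsto (fun n => f n ω) atTop (𝓝 c) :=
  hf.exists_ae_tendsto_of_bdd (hf.eLpNorm_one_le_of_le_of_nonneg hfS hS_nonneg hS_int hSC)

theorem ae_summable_norm_of_summable_integral_norm {ι E : Type*} [Countable ι]
    [NormedAddCommGroup E] {f : ι → Ω → E} (hf : ∀ i, Integrable (f i) μ)
    (hsum : Summable fun i => ∫ ω, ‖f i ω‖ ∂μ) :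
    ∀ᵐ ω ∂μ, Summable fun i => ‖f i ω‖ := by
  refine summable_norm_of_tsum_eLpNorm_ne_top le_rfl (fun i => (hf i).aestronglyMeasurable) ?_
  simp_rw [eLpNorm_one_eq_lintegral_enorm, ← ofReal_integral_norm_eq_lintegral_enorm (hf _),
    ← ENNReal.ofReal_tsum_of_nonneg (fun i => integral_nonneg fun ω => norm_nonneg (f i ω))
      hsum]
  exact ENNReal.ofReal_ne_top

theorem exists_measurable_nonneg_limit {f : ℕ → Ω → ℝ} (hf : ∀ n, AEMeasurable (f n) μ)
    (hf_nonneg : ∀ n ω, 0 ≤ f n ω)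
    (hlim : ∀ᵐ ω ∂μ, ∃ c, Tendsto (fun n => f n ω) atTop (𝓝 c)) :
    ∃ g : Ω → ℝ, Measurable g ∧ (∀ ω, 0 ≤ g ω) ∧
      ∀ᵐ ω ∂μ, Tendsto (fun n => f n ω) atTop (𝓝 (g ω)) := by
  obtain ⟨g, hg_meas, hg⟩ := measurable_limit_of_tendsto_metrizable_ae hf hlim
  refine ⟨fun ω => max (g ω) 0, hg_meas.max measurable_const, fun ω => le_max_right _ _, ?_⟩
  filter_upwards [hg] with ω hω
  rwa [max_eq_left (ge_of_tendsto' hω fun n => hf_nonneg n ω)]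

end MeasureTheory

/-- The extension of the supermartingale convergence theorem stated in the paper
(a Robbins–Siegmund-type result): if `Y` and `Z` are nonnegative, integrable,
adapted sequences with `E[Y (t+1) ∣ ℱ t] ≤ Y t + Z t` a.s. for every `t` and
`∑ t, E[Z t] < ∞`, then `Y t` converges almost surely to a nonnegative random
variable. -/
theorem almost_supermartingale_convergence
    {Ω : Type*} {mΩ : MeasurableSpace Ω} (μ : Measure Ω) [IsProbabilityMeasure μ]
    (ℱ : Filtration ℕ mΩ)
    (Y Z : ℕ → Ω → ℝ)
    (hY_adapted : Adapted ℱ Y) (hZ_adapted : Adapted ℱ Z)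
    (hY_nonneg : ∀ t ω, 0 ≤ Y t ω) (hZ_nonneg : ∀ t ω, 0 ≤ Z t ω)
    (hY_int : ∀ t, Integrable (Y t) μ) (hZ_int : ∀ t, Integrable (Z t) μ)
    (hcond : ∀ t, ∀ᵐ ω ∂μ, (μ[Y (t + 1)|ℱ t]) ω ≤ Y t ω + Z t ω)
    (hsum : Summable fun t => ∫ ω, Z t ω ∂μ) :
    ∃ Ylim : Ω → ℝ, Measurable Ylim ∧ (∀ ω, 0 ≤ Ylim ω) ∧
      ∀ᵐ ω ∂μ, Tendsto (fun t => Y t ω) atTop (nhds (Ylim ω)) := by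
  set S : ℕ → Ω → ℝ := fun t ω => ∑ s ∈ range t, Z s ω
  have hS_int : ∀ t, Integrable (S t) μ := fun t => integrable_finsetSum _ fun s _ => hZ_int s
  have hS_le_tsum : ∀ t, ∫ ω, S t ω ∂μ ≤ ∑' s, ∫ ω, Z s ω ∂μ := fun t => by
    rw [integral_finsetSum _ fun s _ => hZ_int s]
    exact hsum.sum_le_tsum _ fun s _ => integral_nonneg (hZ_nonneg s)
  have hS_sub_Y_tendsto := (submartingale_sum_range_sub hY_adapted hZ_adapted hY_int hZ_int
    hcond).exists_ae_tendsto_of_le_of_nonneg (S := S) (fun t ω => by linarith [hY_nonneg t ω])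
    (fun t ω => sum_nonneg fun s _ => hZ_nonneg s ω) hS_int hS_le_tsum
  have hZ_summable : ∀ᵐ ω ∂μ, Summable fun t => Z t ω := by
    filter_upwards [ae_summable_norm_of_summable_integral_norm hZ_int
      (by simpa only [Real.norm_of_nonneg (hZ_nonneg _ _)] using hsum)] with ω hω
    exact hω.of_norm
  refine exists_measurable_nonneg_limit
    (fun t => ((hY_adapted t).mono (ℱ.le t) le_rfl).aemeasurable) hY_nonneg ?_
  filter_upwards [hS_sub_Y_tendsto, hZ_summable] with ω ⟨c, hc⟩ hω
  exact ⟨∑' t, Z t ω - c, by simpa [S] using hω.hasSum.tendsto_sum_nat.sub hc⟩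
end
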